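/- arXiv:1910.13064 — 2 statements merged into one kernel-verified Lean document; each statement's English description precedes it below -/
import Mathlib

section
/- Let α > 0 and let φ : [0,∞) → [0,∞) be continuously differentiable, strictly increasing, with φ(0) = 0 and lim_{r→0+} φ(r)/r^α = 0. Suppose there exist a function ψ : [1,∞) → (0,∞) with ψ(p) ≤ p for all p and ψ(p) → ∞ as p → ∞, and a number p₀ ≥ 1 such that (φ^{−1}(t/p))^α ≤ ψ(p)^{−1} (φ^{−1}(t))^α for all p ≥ p₀ and all t in the interval [0, sup_{r≥0} φ(r)). Then for every R' > 0 there exists p₁ ≥ 1 such that for all p ≥ p₁, ∫₀^{R'} (1 − e^{−pφ(r)}) r^{−1−α} dr ≥ ψ(p) ∫₀^{R'} (1 − e^{−φ(r)}) r^{−1−α} dr, as an inequality in [0,∞]. -/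
open MeasureTheory Real ENNReal Filter Set

/-!
Since `1 - e^{-a} = ∫₀^a e^{-t} dt`, the layer-cake formula turns both sides into integrals over
`t > 0` against `e^{-t} dt` of the `r^{-1-α} dr`-measure of the superlevel sets
`{r ∈ (0, R'] : t ≤ p φ(r)}`, so it suffices to compare these measures level by level. By
monotonicity the superlevel set is `[φ⁻¹(t/p), R']`, of measure `((φ⁻¹(t/p))^{-α} - R'^{-α}) / α`
(and it is empty when `t > φ(R')`). Condition (2.8) gives `ψ(p) (φ⁻¹ t)^{-α} ≤ (φ⁻¹(t/p))^{-α}`,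
and `ψ(p) ≥ 1` for large `p` takes care of the `R'^{-α}` term.
-/

theorem intervalIntegral_exp_neg (a : ℝ) : ∫ t in 0..a, exp (-t) = 1 - exp (-a) := by
  simp [intervalIntegral.integral_comp_neg (fun t => exp t)]

section LayerCake

variable {X Y : Type*} [MeasurableSpace X] [MeasurableSpace Y]

theorem lintegral_ofReal_one_sub_exp_neg {μ : Measure X} {f : X → ℝ} (hf0 : 0 ≤ᵐ[μ] f)
    (hf : AEMeasurable f μ) :
    ∫⁻ x, ENNReal.ofReal (1 - exp (-f x)) ∂μ =
      ∫⁻ t in Ioi 0, μ {x | t ≤ f x} * ENNReal.ofReal (exp (-t)) := by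
  simp_rw [← intervalIntegral_exp_neg]
  exact lintegral_comp_eq_lintegral_meas_le_mul μ hf0 hf
    (fun t _ => (Real.continuous_exp.comp continuous_neg).intervalIntegrable 0 t)
    (Eventually.of_forall fun t => (exp_pos _).le)

theorem const_mul_lintegral_ofReal_one_sub_exp_neg_le {μ : Measure X} {ν : Measure Y}
    {f : X → ℝ} {g : Y → ℝ} (hf0 : 0 ≤ᵐ[μ] f) (hf : AEMeasurable f μ) (hg0 : 0 ≤ᵐ[ν] g)
    (hg : AEMeasurable g ν) {c : ℝ≥0∞} (h : ∀ t > 0, c * μ {x | t ≤ f x} ≤ ν {y | t ≤ g y}) :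
    c * ∫⁻ x, ENNReal.ofReal (1 - exp (-f x)) ∂μ ≤ ∫⁻ y, ENNReal.ofReal (1 - exp (-g y)) ∂ν := by
  rw [lintegral_ofReal_one_sub_exp_neg hf0 hf, lintegral_ofReal_one_sub_exp_neg hg0 hg]
  refine (lintegral_const_mul_le _ _).trans (setLIntegral_mono' measurableSet_Ioi fun t ht => ?_)
  rw [← mul_assoc]
  exact mul_le_mul_left (h t ht) _

end LayerCake

noncomputable def rpowMeasureIoc (α R : ℝ) : Measure ℝ :=
  (volume.restrict (Ioc 0 R)).withDensity fun r => ENNReal.ofReal (r ^ (-1 - α))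

section RpowMeasureIoc

variable {α R : ℝ}

theorem setLIntegral_Ioc_ofReal_mul_rpow (f : ℝ → ℝ) :
    ∫⁻ r in Ioc 0 R, ENNReal.ofReal (f r * r ^ (-1 - α)) =
      ∫⁻ r, ENNReal.ofReal (f r) ∂rpowMeasureIoc α R := by
  rw [rpowMeasureIoc, lintegral_withDensity_eq_lintegral_mul_non_measurable _
    (by fun_prop) (Eventually.of_forall fun _ => ofReal_lt_top)]
  refine setLIntegral_congr_fun measurableSet_Ioc fun r hr => ?_
  rw [Pi.mul_apply, mul_comm, ENNReal.ofReal_mul (rpow_nonneg hr.1.le _)]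

theorem rpowMeasureIoc_apply (s : Set ℝ) :
    rpowMeasureIoc α R s = ∫⁻ r in s ∩ Ioc 0 R, ENNReal.ofReal (r ^ (-1 - α)) := by
  rw [rpowMeasureIoc, withDensity_apply', Measure.restrict_restrict' measurableSet_Ioc]

theorem ae_mem_Ioc_rpowMeasureIoc : ∀ᵐ r ∂rpowMeasureIoc α R, r ∈ Ioc 0 R :=
  (withDensity_absolutelyContinuous _ _).ae_le (ae_restrict_mem measurableSet_Ioc)

theorem aemeasurable_rpowMeasureIoc {f : ℝ → ℝ} (hf : ContinuousOn f (Ioc 0 R)) :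
    AEMeasurable f (rpowMeasureIoc α R) :=
  (hf.aemeasurable measurableSet_Ioc).mono_ac (withDensity_absolutelyContinuous _ _)

theorem setLIntegral_Icc_rpow (hα : 0 < α) {ρ : ℝ} (hρ : 0 < ρ) (hρR : ρ ≤ R) :
    ∫⁻ r in Icc ρ R, ENNReal.ofReal (r ^ (-1 - α)) =
      ENNReal.ofReal ((ρ ^ (-α) - R ^ (-α)) / α) := by
  have hcont : ContinuousOn (fun r : ℝ => r ^ (-1 - α)) (Icc ρ R) := fun r hr =>
    (continuousAt_rpow_const r _ (Or.inl (hρ.trans_le hr.1).ne')).continuousWithinAt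
  rw [← ofReal_integral_eq_lintegral_ofReal (hcont.integrableOn_Icc)
    ((ae_restrict_iff' measurableSet_Icc).2 (Eventually.of_forall fun r hr =>
      rpow_nonneg (hρ.le.trans hr.1) _)),
    integral_Icc_eq_integral_Ioc, ← intervalIntegral.integral_of_le hρR, integral_rpow]
  · rw [show (-1 : ℝ) - α + 1 = -α by ring, div_neg, ← neg_div, neg_sub]
  · exact Or.inr ⟨by linarith, by simp [uIcc_of_le hρR, hρ.not_ge]⟩

end RpowMeasureIoc

theorem mul_inv_sub_inv_le_inv_sub_inv {c x y z : ℝ} (hc : 1 ≤ c) (hy : 0 < y) (hz : 0 < z)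
    (h : c * y ≤ x) : c * (x⁻¹ - z⁻¹) ≤ y⁻¹ - z⁻¹ := by
  have hx : 0 < x := by nlinarith
  have hcx : c * x⁻¹ ≤ y⁻¹ := by
    rw [← div_eq_mul_inv, div_le_iff₀ hx, ← div_eq_inv_mul, le_div_iff₀ hy]
    linarith
  have hcz : z⁻¹ ≤ c * z⁻¹ := le_mul_of_one_le_left (inv_nonneg.2 hz.le) hc
  rw [mul_sub]
  linarith

section Superlevel

variable {α R : ℝ} {φ : ℝ → ℝ}

theorem StrictMonoOn.setOf_le_inter_Ioc (hφ : StrictMonoOn φ (Ici 0)) {ρ : ℝ} (hρ : 0 < ρ) :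
    {r | φ ρ ≤ φ r} ∩ Ioc 0 R = Icc ρ R := by
  ext r
  constructor
  · rintro ⟨h, hr, hrR⟩
    exact ⟨(hφ.le_iff_le hρ.le hr.le).1 h, hrR⟩
  · rintro ⟨hρr, hrR⟩
    have hr : 0 < r := hρ.trans_le hρr
    exact ⟨(hφ.le_iff_le hρ.le hr.le).2 hρr, hr, hrR⟩

theorem MonotoneOn.setOf_le_inter_Ioc_eq_empty (hφ : MonotoneOn φ (Ici 0)) {t : ℝ}
    (ht : φ R < t) : {r | t ≤ φ r} ∩ Ioc 0 R = ∅ := by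
  refine eq_empty_of_forall_notMem fun r ⟨htr, hr, hrR⟩ => ?_
  exact (htr.trans (hφ hr.le (hr.le.trans hrR) hrR)).not_gt ht

theorem rpowMeasureIoc_setOf_le (hα : 0 < α) (hφ : StrictMonoOn φ (Ici 0)) {ρ : ℝ}
    (hρ : 0 < ρ) (hρR : ρ ≤ R) :
    rpowMeasureIoc α R {r | φ ρ ≤ φ r} = ENNReal.ofReal ((ρ ^ (-α) - R ^ (-α)) / α) := by
  rw [rpowMeasureIoc_apply, hφ.setOf_le_inter_Ioc hρ, setLIntegral_Icc_rpow hα hρ hρR]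

theorem rpowMeasureIoc_setOf_le_eq_zero (hφ : MonotoneOn φ (Ici 0)) {t : ℝ} (ht : φ R < t) :
    rpowMeasureIoc α R {r | t ≤ φ r} = 0 := by
  rw [rpowMeasureIoc_apply, hφ.setOf_le_inter_Ioc_eq_empty ht, Measure.restrict_empty,
    lintegral_zero_measure]

theorem ofReal_mul_rpowMeasureIoc_setOf_le_le (hα : 0 < α) (hR : 0 < R)
    (hφc : ContinuousOn φ (Icc 0 R)) (hφ : StrictMonoOn φ (Ici 0)) (hφ0 : φ 0 = 0)
    {φinv : ℝ → ℝ} (hinv : ∀ r ∈ Ici 0, φinv (φ r) = r) {c p : ℝ} (hc : 1 ≤ c) (hp : 1 ≤ p)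
    (hcond : ∀ t, 0 < t → t ≤ φ R → φinv (t / p) ^ α ≤ c⁻¹ * φinv t ^ α) {t : ℝ} (ht : 0 < t) :
    ENNReal.ofReal c * rpowMeasureIoc α R {r | t ≤ φ r} ≤
      rpowMeasureIoc α R {r | t / p ≤ φ r} := by
  rcases le_or_gt t (φ R) with htR | htR
  · have level : ∀ u, 0 < u → u ≤ φ R → ∃ ρ ∈ Ioc 0 R, φ ρ = u := fun u hu huR => by
      obtain ⟨ρ, hρ, hφρ⟩ := intermediate_value_Icc hR.le hφc ⟨hφ0.trans_le hu.le, huR⟩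
      refine ⟨ρ, ⟨hρ.1.lt_of_ne ?_, hρ.2⟩, hφρ⟩
      rintro rfl
      exact hu.ne' (hφρ.symm.trans hφ0)
    have htp : 0 < t / p := div_pos ht (by linarith)
    obtain ⟨ρₚ, hρₚ, hφρₚ⟩ := level (t / p) htp ((div_le_self ht.le hp).trans htR)
    obtain ⟨ρ₁, hρ₁, rfl⟩ := level t ht htR
    have key := hcond (φ ρ₁) ht htR
    rw [← hφρₚ, hinv ρₚ hρₚ.1.le, hinv ρ₁ hρ₁.1.le, le_inv_mul_iff₀ (by linarith)] at key
    rw [← hφρₚ, rpowMeasureIoc_setOf_le hα hφ hρ₁.1 hρ₁.2,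
      rpowMeasureIoc_setOf_le hα hφ hρₚ.1 hρₚ.2, ← ENNReal.ofReal_mul (by linarith),
      rpow_neg hρ₁.1.le, rpow_neg hρₚ.1.le, rpow_neg hR.le, ← mul_div_assoc]
    exact ofReal_le_ofReal (div_le_div_of_nonneg_right (mul_inv_sub_inv_le_inv_sub_inv hc
      (rpow_pos_of_pos hρₚ.1 α) (rpow_pos_of_pos hR α) key) hα.le)
  · rw [rpowMeasureIoc_setOf_le_eq_zero hφ.monotoneOn htR, mul_zero]
    exact zero_le

end Superlevel

theorem stmt3_general (α : ℝ) (hα : 0 < α) (φ : ℝ → ℝ)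
    (hφ0 : ∀ r ∈ Set.Ici (0 : ℝ), 0 ≤ φ r)
    (hφC1 : ContDiffOn ℝ 1 φ (Set.Ici (0 : ℝ)))
    (hφmono : StrictMonoOn φ (Set.Ici (0 : ℝ)))
    (hφzero : φ 0 = 0)
    (φinv : ℝ → ℝ)
    (hinv1 : ∀ t ∈ Set.Ici (0 : ℝ), φinv (φ t) = t)
    (ψ : ℝ → ℝ)
    (hψtop : Filter.Tendsto ψ Filter.atTop Filter.atTop)
    (p₀ : ℝ) (hp₀ : 1 ≤ p₀)
    (hphiinv : ∀ p ≥ p₀, ∀ t : ℝ, 0 ≤ t → (∃ r ≥ (0 : ℝ), t < φ r) →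
      (φinv (t / p)) ^ α ≤ (ψ p)⁻¹ * (φinv t) ^ α)
    (R' : ℝ) (hR' : 0 < R') :
    ∃ p₁ ≥ (1 : ℝ), ∀ p ≥ p₁,
      ENNReal.ofReal (ψ p) *
          ∫⁻ r in Set.Ioc (0 : ℝ) R',
            ENNReal.ofReal ((1 - Real.exp (-φ r)) * r ^ (-1 - α))
        ≤ ∫⁻ r in Set.Ioc (0 : ℝ) R',
            ENNReal.ofReal ((1 - Real.exp (-(p * φ r))) * r ^ (-1 - α)) := by
  obtain ⟨N, hN⟩ := eventually_atTop.1 (hψtop.eventually_ge_atTop 1)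
  refine ⟨max p₀ N, hp₀.trans (le_max_left _ _), fun p hp => ?_⟩
  have hpp₀ : p₀ ≤ p := (le_max_left _ _).trans hp
  have hp1 : 1 ≤ p := hp₀.trans hpp₀
  have hφ_nonneg : 0 ≤ᵐ[rpowMeasureIoc α R'] φ :=
    ae_mem_Ioc_rpowMeasureIoc.mono fun r hr => hφ0 r hr.1.le
  have hφ_meas : AEMeasurable φ (rpowMeasureIoc α R') :=
    aemeasurable_rpowMeasureIoc (hφC1.continuousOn.mono fun r hr => hr.1.le)
  have hcond (t : ℝ) (ht : 0 < t) (htR : t ≤ φ R') :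
      φinv (t / p) ^ α ≤ (ψ p)⁻¹ * φinv t ^ α :=
    hphiinv p hpp₀ t ht.le ⟨R' + 1, by linarith,
      htR.trans_lt (hφmono hR'.le (by linarith : (0 : ℝ) ≤ R' + 1) (by linarith))⟩
  rw [setLIntegral_Ioc_ofReal_mul_rpow, setLIntegral_Ioc_ofReal_mul_rpow]
  refine const_mul_lintegral_ofReal_one_sub_exp_neg_le hφ_nonneg hφ_meas
    (hφ_nonneg.mono fun r hr => mul_nonneg (zero_le_one.trans hp1) hr) (hφ_meas.const_mul p) fun t ht => ?_
  have hlevel : {r | t ≤ p * φ r} = {r | t / p ≤ φ r} := by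
    ext r
    exact (div_le_iff₀' (zero_lt_one.trans_le hp1)).symm
  rw [hlevel]
  exact ofReal_mul_rpowMeasureIoc_setOf_le_le hα hR' (hφC1.continuousOn.mono Icc_subset_Ici_self)
    hφmono hφzero hinv1 (hN p ((le_max_right _ _).trans hp)) hp1 hcond ht

/-- Under condition (2.8) of the paper on `φ⁻¹`, for every `R' > 0` and all large `p`,
`∫₀^{R'} (1 − e^{−pφ(r)}) r^{−1−α} dr ≥ ψ(p) ∫₀^{R'} (1 − e^{−φ(r)}) r^{−1−α} dr`
as an inequality in `[0,∞]`. -/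
theorem stmt3 (α : ℝ) (hα : 0 < α) (φ : ℝ → ℝ)
    (hφ0 : ∀ r ∈ Set.Ici (0 : ℝ), 0 ≤ φ r)
    (hφC1 : ContDiffOn ℝ 1 φ (Set.Ici (0 : ℝ)))
    (hφmono : StrictMonoOn φ (Set.Ici (0 : ℝ)))
    (hφzero : φ 0 = 0)
    (hφlittleo : Filter.Tendsto (fun r => φ r / r ^ α) (nhdsWithin 0 (Set.Ioi 0)) (nhds 0))
    (φinv : ℝ → ℝ)
    (hinv1 : ∀ t ∈ Set.Ici (0 : ℝ), φinv (φ t) = t)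
    (hinv2 : ∀ s ∈ φ '' Set.Ici (0 : ℝ), φ (φinv s) = s)
    (ψ : ℝ → ℝ) (hψpos : ∀ p ≥ (1 : ℝ), 0 < ψ p) (hψle : ∀ p ≥ (1 : ℝ), ψ p ≤ p)
    (hψtop : Filter.Tendsto ψ Filter.atTop Filter.atTop)
    (p₀ : ℝ) (hp₀ : 1 ≤ p₀)
    (hphiinv : ∀ p ≥ p₀, ∀ t : ℝ, 0 ≤ t → (∃ r ≥ (0 : ℝ), t < φ r) →
      (φinv (t / p)) ^ α ≤ (ψ p)⁻¹ * (φinv t) ^ α)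
    (R' : ℝ) (hR' : 0 < R') :
    ∃ p₁ ≥ (1 : ℝ), ∀ p ≥ p₁,
      ENNReal.ofReal (ψ p) *
          ∫⁻ r in Set.Ioc (0 : ℝ) R',
            ENNReal.ofReal ((1 - Real.exp (-φ r)) * r ^ (-1 - α))
        ≤ ∫⁻ r in Set.Ioc (0 : ℝ) R',
            ENNReal.ofReal ((1 - Real.exp (-(p * φ r))) * r ^ (-1 - α)) :=
  stmt3_general α hα φ hφ0 hφC1 hφmono hφzero φinv hinv1 ψ hψtop p₀ hp₀ hphiinv R' hR'
end

section
/- Let d ≥ 1 be an integer, 0 < α < 2, and R, R' > 0. Let φ : [0,∞) → [0,∞) be continuously differentiable, strictly increasing, with φ(0) = 0 and lim_{r→0+} φ(r)/r^α = 0, and suppose there exist ψ : [1,∞) → (0,∞) with ψ(p) ≤ p for all p and ψ(p) → ∞ as p → ∞, and p₀ ≥ 1, such that (φ^{−1}(t/p))^α ≤ ψ(p)^{−1} (φ^{−1}(t))^α for all p ≥ p₀ and all t ∈ [0, sup_{r≥0} φ(r)). Define F : ℝ^d × ℝ^d → [0,∞) by F(x,y) := (1/2) φ(|x−y|) · [ 1_{B(x,R')}(y)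 1_{B(0,R)}(x) + 1_{B(y,R')}(x) 1_{B(0,R)}(y) + 1_{B(y,R')}(x) 1_{B(x,R')}(y) 1_{A}(x) 1_{A}(y) ], where A := B(0,R+R') \ B(0,R). Then there exists p₁ ≥ 1 such that for all p ≥ p₁ and all x ∈ ℝ^d, 𝐅^{(p)}1(x) ≥ (ψ(p)/2) · 𝐅1(x), as an inequality in [0,∞]. -/
open MeasureTheory Real ENNReal

/-- The constant `C_{d,α} = α·2^(α−1)·π^(−d/2)·Γ((d+α)/2)·Γ(1−α/2)⁻¹`. -/
noncomputable def Cda (d : ℕ) (α : ℝ) : ℝ :=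
  α * (2 : ℝ) ^ (α - 1) * Real.pi ^ (-(d : ℝ) / 2) *
    Real.Gamma (((d : ℝ) + α) / 2) / Real.Gamma (1 - α / 2)

/-- `𝐅^{(p)}1(x) = C_{d,α} ∫ (1 − e^{−pF(x,y)}) |x−y|^{−(d+α)} dy`, in `[0,∞]`. -/
noncomputable def Fp1 (d : ℕ) (α : ℝ)
    (F : EuclideanSpace ℝ (Fin d) → EuclideanSpace ℝ (Fin d) → ℝ) (p : ℝ)
    (x : EuclideanSpace ℝ (Fin d)) : ℝ≥0∞ :=
  ENNReal.ofReal (Cda d α) *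
    ∫⁻ y, ENNReal.ofReal ((1 - Real.exp (-(p * F x y))) * ‖x - y‖ ^ (-((d : ℝ) + α)))

/-! Off `S = B(x,R') ∩ B(0,R+R')` the kernel `F(x,·)` vanishes, and on `S` it lies between
`φ(|x-y|)/2` and `φ(|x-y|)`; since `1 - e^{-2u} ≤ 2(1 - e^{-u})`, this costs the factor `1/2`.
By the layer-cake formula for `1 - e^{-u}`, it then suffices to compare the measures
`|x-y|^{-(d+α)} dy` of the superlevel sets `{φ(|x-y|) > t} ∩ S = {|x-y| > φ⁻¹ t} ∩ S` and
`{p φ(|x-y|) > t} ∩ S`. The hypothesis on `φ⁻¹` says `φ⁻¹(t/p) ≤ ψ(p)^{-1/α} φ⁻¹(t)`,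
and the homothety about `x` of ratio `ψ(p)^{-1/α} ≤ 1` maps the first set into the second (`S` is
star-shaped about `x`) while multiplying this measure by exactly `ψ(p)`. -/

lemma integral_exp_neg_zero_to (u : ℝ) : ∫ t in (0 : ℝ)..u, exp (-t) = 1 - exp (-u) := by
  rw [intervalIntegral.integral_comp_neg (fun t => exp t), integral_exp, neg_zero, exp_zero]

lemma one_sub_exp_neg_two_mul_le {u : ℝ} (hu : 0 ≤ u) :
    1 - exp (-(2 * u)) ≤ 2 * (1 - exp (-u)) := by
  have hsq : exp (-(2 * u)) = exp (-u) ^ 2 := by rw [← exp_nat_mul]; ring_nf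
  have hle : exp (-u) ≤ 1 := exp_le_one_iff.2 (by linarith)
  nlinarith [exp_pos (-u)]

lemma lintegral_one_sub_exp_neg_eq_lintegral_meas_lt {X : Type*} [MeasurableSpace X]
    (ν : Measure X) {f : X → ℝ} (hf0 : 0 ≤ f) (hf : Measurable f) :
    ∫⁻ y, ENNReal.ofReal (1 - exp (-f y)) ∂ν =
      ∫⁻ t in Set.Ioi 0, ν {y | t < f y} * ENNReal.ofReal (exp (-t)) := by
  simp_rw [← integral_exp_neg_zero_to]
  exact lintegral_comp_eq_lintegral_meas_lt_mul ν (Filter.Eventually.of_forall hf0)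
    hf.aemeasurable (fun t _ => (Real.continuous_exp.comp continuous_neg).intervalIntegrable 0 t)
    (Filter.Eventually.of_forall fun t => (exp_pos _).le)

lemma mul_lintegral_one_sub_exp_neg_le {X : Type*} [MeasurableSpace X] (ν : Measure X)
    {f : X → ℝ} (hf0 : 0 ≤ f) (hf : Measurable f) {c : ℝ≥0∞} {p : ℝ} (hp : 0 ≤ p)
    (hlevel : ∀ t > 0, c * ν {y | t < f y} ≤ ν {y | t < p * f y}) :
    c * ∫⁻ y, ENNReal.ofReal (1 - exp (-f y)) ∂ν ≤
      ∫⁻ y, ENNReal.ofReal (1 - exp (-(p * f y))) ∂ν := by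
  rw [lintegral_one_sub_exp_neg_eq_lintegral_meas_lt ν hf0 hf,
    lintegral_one_sub_exp_neg_eq_lintegral_meas_lt ν (fun y => mul_nonneg hp (hf0 y))
      (hf.const_mul p)]
  refine (lintegral_const_mul_le _ _).trans (setLIntegral_mono' measurableSet_Ioi fun t ht => ?_)
  rw [← mul_assoc]
  exact mul_le_mul_left (hlevel t ht) _

lemma mul_lintegral_one_sub_exp_neg_le_of_sandwich {X : Type*} [MeasurableSpace X]
    (ρ : Measure X) {S : Set X} (hS : MeasurableSet S) {G f : X → ℝ} (hf0 : 0 ≤ f)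
    (hf : Measurable f) (hGS : ∀ y ∈ S, f y / 2 ≤ G y ∧ G y ≤ f y)
    (hG0 : ∀ y ∉ S, G y = 0) {c p : ℝ} (hp : 0 ≤ p)
    (hlevel : ∀ t > 0,
      ENNReal.ofReal c * ρ ({y | t < f y} ∩ S) ≤ ρ ({y | t < p * f y} ∩ S)) :
    ENNReal.ofReal (c / 2) * ∫⁻ y, ENNReal.ofReal (1 - exp (-G y)) ∂ρ ≤
      ∫⁻ y, ENNReal.ofReal (1 - exp (-(p * G y))) ∂ρ := by
  have hh0 : 0 ≤ fun y => f y / 2 := fun y => div_nonneg (hf0 y) zero_le_two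
  have hupper : ∫⁻ y, ENNReal.ofReal (1 - exp (-G y)) ∂ρ ≤
      2 * ∫⁻ y in S, ENNReal.ofReal (1 - exp (-(f y / 2))) ∂ρ := by
    rw [← setLIntegral_eq_of_support_subset (s := S) fun y hy => by_contra fun hyS =>
      hy (by simp [hG0 y hyS]), ← lintegral_const_mul' _ _ ENNReal.ofNat_ne_top]
    refine setLIntegral_mono' hS fun y hy => ?_
    rw [← ENNReal.ofReal_ofNat 2, ← ENNReal.ofReal_mul zero_le_two]
    refine ENNReal.ofReal_le_ofReal ((sub_le_sub_left (exp_le_exp.2 ?_) 1).trans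
      (one_sub_exp_neg_two_mul_le (hh0 y)))
    linarith [(hGS y hy).2]
  have hlower : ∫⁻ y in S, ENNReal.ofReal (1 - exp (-(p * (f y / 2)))) ∂ρ ≤
      ∫⁻ y, ENNReal.ofReal (1 - exp (-(p * G y))) ∂ρ := by
    refine (setLIntegral_mono' hS fun y hy => ENNReal.ofReal_le_ofReal ?_).trans
      (setLIntegral_le_lintegral _ _)
    exact sub_le_sub_left (exp_le_exp.2 (neg_le_neg (mul_le_mul_of_nonneg_left (hGS y hy).1 hp)))
      1
  have hlayer := mul_lintegral_one_sub_exp_neg_le (ρ.restrict S) hh0 (hf.div_const 2) hp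
    (c := ENNReal.ofReal c) fun t ht => by
      have e1 : {y | t < f y / 2} = {y | 2 * t < f y} := by
        ext y; exact lt_div_iff₀' (two_pos : (0 : ℝ) < 2)
      have e2 : {y | t < p * (f y / 2)} = {y | 2 * t < p * f y} := by
        ext y
        rw [Set.mem_ofPred_eq, Set.mem_ofPred_eq, ← mul_div_assoc]
        exact lt_div_iff₀' (two_pos : (0 : ℝ) < 2)
      rw [Measure.restrict_apply' hS, Measure.restrict_apply' hS, e1, e2]
      exact hlevel (2 * t) (by positivity)
  calc ENNReal.ofReal (c / 2) * ∫⁻ y, ENNReal.ofReal (1 - exp (-G y)) ∂ρ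
      ≤ ENNReal.ofReal (c / 2) *
          (2 * ∫⁻ y in S, ENNReal.ofReal (1 - exp (-(f y / 2))) ∂ρ) := by
        gcongr
    _ = ENNReal.ofReal c * ∫⁻ y in S, ENNReal.ofReal (1 - exp (-(f y / 2))) ∂ρ := by
        rw [← mul_assoc, ← ENNReal.ofReal_ofNat 2, ← ENNReal.ofReal_mul' zero_le_two,
          div_mul_cancel₀ c two_ne_zero]
    _ ≤ _ := hlayer.trans hlower

section StableWeight

variable {E : Type*} [NormedAddCommGroup E] [NormedSpace ℝ E]

lemma norm_sub_homothety (x z : E) {l : ℝ} (hl : 0 ≤ l) :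
    ‖x - AffineMap.homothety x l z‖ = l * ‖x - z‖ := by
  rw [AffineMap.homothety_apply, vsub_eq_sub, vadd_eq_add, sub_add_cancel_right, norm_neg,
    norm_smul, Real.norm_of_nonneg hl, norm_sub_rev]

lemma StarConvex.homothety_mem {S : Set E} {x z : E} (hS : StarConvex ℝ x S) (hz : z ∈ S)
    {l : ℝ} (hl0 : 0 ≤ l) (hl1 : l ≤ 1) : AffineMap.homothety x l z ∈ S := by
  have h := hS hz (sub_nonneg.2 hl1) hl0 (sub_add_cancel 1 l)
  convert h using 1
  rw [AffineMap.homothety_apply, vsub_eq_sub, vadd_eq_add, smul_sub, sub_smul, one_smul]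
  abel

noncomputable def stableWeight (α : ℝ) (x y : E) : ℝ≥0∞ :=
  ENNReal.ofReal (‖x - y‖ ^ (-((Module.finrank ℝ E : ℝ) + α)))

lemma stableWeight_homothety (α : ℝ) (x z : E) {l : ℝ} (hl : 0 ≤ l) :
    stableWeight α x (AffineMap.homothety x l z) =
      ENNReal.ofReal (l ^ (-((Module.finrank ℝ E : ℝ) + α))) * stableWeight α x z := by
  rw [stableWeight, stableWeight, norm_sub_homothety x z hl, mul_rpow hl (norm_nonneg _),
    ENNReal.ofReal_mul (rpow_nonneg hl _)]

variable [MeasurableSpace E] [BorelSpace E]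

@[fun_prop]
lemma measurable_stableWeight (α : ℝ) (x : E) : Measurable (stableWeight α x) := by
  unfold stableWeight; fun_prop

variable [FiniteDimensional ℝ E] (μ : Measure E) [μ.IsAddHaarMeasure]

lemma lintegral_comp_homothety (x : E) {l : ℝ} (hl : l ≠ 0) (g : E → ℝ≥0∞) :
    ∫⁻ z, g (AffineMap.homothety x l z) ∂μ =
      ENNReal.ofReal |(l ^ Module.finrank ℝ E)⁻¹| * ∫⁻ y, g y ∂μ := by
  simp only [AffineMap.homothety_apply, vsub_eq_sub, vadd_eq_add]
  rw [lintegral_sub_right_eq_self (fun z => g (l • z + x)) x]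
  have := lintegral_map_equiv (μ := μ) (fun z => g (z + x)) (MeasurableEquiv.smul₀ l hl)
  rw [MeasurableEquiv.coe_smul₀] at this
  rw [← this, Measure.map_addHaar_smul μ hl, lintegral_smul_measure,
    lintegral_add_right_eq_self g x, smul_eq_mul]

lemma withDensity_stableWeight_eq_mul_preimage_homothety (α : ℝ) (x : E) {l : ℝ} (hl : 0 < l)
    {B : Set E} (hB : MeasurableSet B) :
    μ.withDensity (stableWeight α x) B =
      ENNReal.ofReal (l ^ (-α)) * μ.withDensity (stableWeight α x)
        (AffineMap.homothety x l ⁻¹' B) := by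
  have hT : Measurable (AffineMap.homothety x l) :=
    (AffineMap.homothety_continuous x l).measurable
  have hpow : l ^ (-α) =
      l ^ Module.finrank ℝ E * l ^ (-((Module.finrank ℝ E : ℝ) + α)) := by
    rw [← Real.rpow_natCast, ← rpow_add hl]; ring_nf
  have hcomp := lintegral_comp_homothety μ x hl.ne' (B.indicator (stableWeight α x))
  have hind : ∀ z, B.indicator (stableWeight α x) (AffineMap.homothety x l z) =
      ENNReal.ofReal (l ^ (-((Module.finrank ℝ E : ℝ) + α))) *
        (AffineMap.homothety x l ⁻¹' B).indicator (stableWeight α x) z := by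
    intro z
    by_cases hz : AffineMap.homothety x l z ∈ B
    · rw [Set.indicator_of_mem hz, Set.indicator_of_mem (Set.mem_preimage.2 hz),
        stableWeight_homothety α x z hl.le]
    · rw [Set.indicator_of_notMem hz, Set.indicator_of_notMem (by exact hz), mul_zero]
  rw [withDensity_apply _ hB, withDensity_apply _ (hB.preimage hT), ← lintegral_indicator hB,
    ← lintegral_indicator (hB.preimage hT)]
  simp_rw [hind] at hcomp
  rw [lintegral_const_mul' _ _ ENNReal.ofReal_ne_top] at hcomp
  have hld : ENNReal.ofReal (l ^ Module.finrank ℝ E) *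
      ENNReal.ofReal |(l ^ Module.finrank ℝ E)⁻¹| = 1 := by
    have hpos : 0 < l ^ Module.finrank ℝ E := pow_pos hl _
    rw [abs_of_pos (inv_pos.2 hpos), ← ENNReal.ofReal_mul hpos.le, mul_inv_cancel₀ hpos.ne',
      ENNReal.ofReal_one]
  calc ∫⁻ y, B.indicator (stableWeight α x) y ∂μ
      = ENNReal.ofReal (l ^ Module.finrank ℝ E) *
          (ENNReal.ofReal |(l ^ Module.finrank ℝ E)⁻¹| *
            ∫⁻ y, B.indicator (stableWeight α x) y ∂μ) := by
        rw [← mul_assoc, hld, one_mul]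
    _ = _ := by
      rw [← hcomp, ← mul_assoc, ← ENNReal.ofReal_mul (pow_nonneg hl.le _), hpow]

variable {μ} {x : E} {S : Set E}

lemma ofReal_mul_withDensity_stableWeight_le (hS : StarConvex ℝ x S) (hSm : MeasurableSet S)
    {α c a b : ℝ} (hα : 0 < α) (hc : 1 ≤ c) (ha : 0 ≤ a) (hb : 0 ≤ b)
    (hba : b ^ α ≤ c⁻¹ * a ^ α) :
    ENNReal.ofReal c * μ.withDensity (stableWeight α x) ({y | a < ‖x - y‖} ∩ S) ≤
      μ.withDensity (stableWeight α x) ({y | b < ‖x - y‖} ∩ S) := by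
  set l := c ^ (-α⁻¹) with hl
  have hc0 : 0 < c := one_pos.trans_le hc
  have hl0 : 0 < l := rpow_pos_of_pos hc0 _
  have hl1 : l ≤ 1 := rpow_le_one_of_one_le_of_nonpos hc (by simp [hα.le])
  have hlα : l ^ α = c⁻¹ := by
    rw [hl, ← rpow_mul hc0.le, neg_mul, inv_mul_cancel₀ hα.ne', Real.rpow_neg_one]
  have hlα' : l ^ (-α) = c := by rw [rpow_neg hl0.le, hlα, inv_inv]
  have hbla : b ≤ l * a := by
    rwa [← rpow_le_rpow_iff hb (mul_nonneg hl0.le ha) hα, mul_rpow hl0.le ha, hlα]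
  have hsub : {y | a < ‖x - y‖} ∩ S ⊆
      AffineMap.homothety x l ⁻¹' ({y | b < ‖x - y‖} ∩ S) := by
    rintro z ⟨hz, hzS⟩
    refine ⟨?_, hS.homothety_mem hzS hl0.le hl1⟩
    simp only [Set.mem_ofPred_eq, norm_sub_homothety x z hl0.le] at hz ⊢
    exact hbla.trans_lt (mul_lt_mul_of_pos_left hz hl0)
  have hBm : MeasurableSet ({y | b < ‖x - y‖} ∩ S) :=
    (measurableSet_lt measurable_const (by fun_prop)).inter hSm
  rw [withDensity_stableWeight_eq_mul_preimage_homothety μ α x hl0 hBm, hlα']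
  gcongr

lemma ofReal_mul_withDensity_superlevel_le {φ φinv : ℝ → ℝ}
    (hφc : ContinuousOn φ (Set.Ici 0)) (hφm : StrictMonoOn φ (Set.Ici 0)) (hφ0 : φ 0 = 0)
    (hinv : ∀ t ∈ Set.Ici (0 : ℝ), φinv (φ t) = t) {α c p : ℝ} (hα : 0 < α)
    (hc : 1 ≤ c) (hp : 1 ≤ p)
    (hscale : ∀ t : ℝ, 0 ≤ t → (∃ r ≥ (0 : ℝ), t < φ r) →
      φinv (t / p) ^ α ≤ c⁻¹ * φinv t ^ α)
    (hS : StarConvex ℝ x S) (hSm : MeasurableSet S) {t : ℝ} (ht : 0 ≤ t) :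
    ENNReal.ofReal c * μ.withDensity (stableWeight α x) ({y | t < φ ‖x - y‖} ∩ S) ≤
      μ.withDensity (stableWeight α x) ({y | t < p * φ ‖x - y‖} ∩ S) := by
  by_cases hrange : ∃ r ≥ (0 : ℝ), t < φ r
  · obtain ⟨r, hr0, hr⟩ := hrange
    have hivt : ∀ s ∈ Set.Icc 0 t, ∃ a ≥ (0 : ℝ), φ a = s := fun s hs => by
      obtain ⟨a, ha, has⟩ := intermediate_value_Icc hr0 (hφc.mono Set.Icc_subset_Ici_self)
        ⟨hφ0.symm ▸ hs.1, hs.2.trans hr.le⟩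
      exact ⟨a, ha.1, has⟩
    have hp0 : 0 < p := one_pos.trans_le hp
    obtain ⟨a, ha0, hat⟩ := hivt t ⟨ht, le_rfl⟩
    obtain ⟨b, hb0, hbt⟩ := hivt (t / p) ⟨div_nonneg ht hp0.le, div_le_self ht hp⟩
    have hsuper : ∀ s ≥ (0 : ℝ), {y : E | φ s < φ ‖x - y‖} = {y | s < ‖x - y‖} :=
      fun s hs => by ext y; exact hφm.lt_iff_lt hs (norm_nonneg _)
    have hba : b ^ α ≤ c⁻¹ * a ^ α := by
      have h := hscale t ht ⟨r, hr0, hr⟩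
      rwa [← hbt, ← hat, hinv b hb0, hinv a ha0] at h
    have hpset : {y : E | t < p * φ ‖x - y‖} = {y | φ b < φ ‖x - y‖} := by
      ext y; simp only [Set.mem_ofPred_eq, hbt, div_lt_iff₀' hp0]
    rw [hpset, hsuper b hb0, ← hat, hsuper a ha0]
    exact ofReal_mul_withDensity_stableWeight_le hS hSm hα hc ha0 hb0 hba
  · push Not at hrange
    have hempty : {y : E | t < φ ‖x - y‖} = ∅ :=
      Set.eq_empty_of_forall_notMem fun y hy => (hrange _ (norm_nonneg _)).not_gt hy
    simp [hempty]

end StableWeight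

section Cutoff

variable {E : Type*} [NormedAddCommGroup E]

noncomputable def ballCutoff (R R' : ℝ) (x y : E) : ℝ :=
  (if ‖y - x‖ < R' then (1 : ℝ) else 0) * (if ‖x‖ < R then (1 : ℝ) else 0)
    + (if ‖x - y‖ < R' then (1 : ℝ) else 0) * (if ‖y‖ < R then (1 : ℝ) else 0)
    + (if ‖x - y‖ < R' then (1 : ℝ) else 0) * (if ‖y - x‖ < R' then (1 : ℝ) else 0)
        * (if ‖x‖ < R + R' ∧ ¬ ‖x‖ < R then (1 : ℝ) else 0)
        * (if ‖y‖ < R + R' ∧ ¬ ‖y‖ < R then (1 : ℝ) else 0)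

variable {R R' : ℝ} {x y : E}

lemma ballCutoff_eq_zero_of_notMem (hy : y ∉ Metric.ball x R' ∩ Metric.ball 0 (R + R')) :
    ballCutoff R R' x y = 0 := by
  rw [Set.mem_inter_iff, Metric.mem_ball, mem_ball_zero_iff, dist_eq_norm] at hy
  by_cases hyx : ‖y - x‖ < R'
  · have hy0 : R + R' ≤ ‖y‖ := not_lt.1 fun h => hy ⟨hyx, h⟩
    have hyR : ¬ ‖y‖ < R := by linarith [norm_nonneg (y - x)]
    have hxR : ¬ ‖x‖ < R := by linarith [norm_le_norm_sub_add y x]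
    simp [ballCutoff, hyR, hxR, hy0.not_gt]
  · simp [ballCutoff, hyx, norm_sub_rev x y]

lemma ballCutoff_eq_zero_of_le_norm (hR' : 0 ≤ R') (hx : R + R' ≤ ‖x‖) :
    ballCutoff R R' x y = 0 := by
  have hxR : ¬ ‖x‖ < R := by linarith
  by_cases hxy : ‖x - y‖ < R'
  · have hyR : ¬ ‖y‖ < R := by linarith [norm_le_norm_sub_add x y]
    simp [ballCutoff, hxR, hyR, hx.not_gt]
  · simp [ballCutoff, hxy, hxR, hx.not_gt]

lemma ballCutoff_mem_Icc (hx : ‖x‖ < R + R')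
    (hy : y ∈ Metric.ball x R' ∩ Metric.ball 0 (R + R')) :
    ballCutoff R R' x y ∈ Set.Icc 1 2 := by
  rw [Set.mem_inter_iff, Metric.mem_ball, mem_ball_zero_iff, dist_eq_norm] at hy
  have hxy : ‖x - y‖ < R' := norm_sub_rev x y ▸ hy.1
  by_cases hxR : ‖x‖ < R <;> by_cases hyR : ‖y‖ < R <;>
    norm_num [ballCutoff, hy.1, hy.2, hx, hxy, hxR, hyR]

end Cutoff

lemma Fp1_eq_lintegral_withDensity {d : ℕ} (α : ℝ)
    (F : EuclideanSpace ℝ (Fin d) → EuclideanSpace ℝ (Fin d) → ℝ) (p : ℝ)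
    (x : EuclideanSpace ℝ (Fin d)) :
    Fp1 d α F p x = ENNReal.ofReal (Cda d α) *
      ∫⁻ y, ENNReal.ofReal (1 - exp (-(p * F x y)))
        ∂volume.withDensity (stableWeight α x) := by
  rw [Fp1, lintegral_withDensity_eq_lintegral_mul_non_measurable _
    (measurable_stableWeight α x) (ae_of_all _ fun _ => ENNReal.ofReal_lt_top)]
  congr 2 with y
  rw [Pi.mul_apply, stableWeight, finrank_euclideanSpace_fin, mul_comm,
    ENNReal.ofReal_mul (rpow_nonneg (norm_nonneg _) _)]

theorem stmt4_general (d : ℕ) (α : ℝ) (hα0 : 0 < α)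
    (R R' : ℝ) (hR' : 0 < R')
    (φ : ℝ → ℝ)
    (hφ0 : ∀ r ∈ Set.Ici (0 : ℝ), 0 ≤ φ r)
    (hφC1 : ContDiffOn ℝ 1 φ (Set.Ici (0 : ℝ)))
    (hφmono : StrictMonoOn φ (Set.Ici (0 : ℝ)))
    (hφzero : φ 0 = 0)
    (φinv : ℝ → ℝ)
    (hinv1 : ∀ t ∈ Set.Ici (0 : ℝ), φinv (φ t) = t)
    (ψ : ℝ → ℝ)
    (hψtop : Filter.Tendsto ψ Filter.atTop Filter.atTop)
    (p₀ : ℝ) (hp₀ : 1 ≤ p₀)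
    (hphiinv : ∀ p ≥ p₀, ∀ t : ℝ, 0 ≤ t → (∃ r ≥ (0 : ℝ), t < φ r) →
      (φinv (t / p)) ^ α ≤ (ψ p)⁻¹ * (φinv t) ^ α)
    (F : EuclideanSpace ℝ (Fin d) → EuclideanSpace ℝ (Fin d) → ℝ)
    (hFdef : ∀ x y, F x y = (1 / 2) * φ ‖x - y‖ *
      ((if ‖y - x‖ < R' then (1 : ℝ) else 0) * (if ‖x‖ < R then (1 : ℝ) else 0)
        + (if ‖x - y‖ < R' then (1 : ℝ) else 0) * (if ‖y‖ < R then (1 : ℝ) else 0)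
        + (if ‖x - y‖ < R' then (1 : ℝ) else 0) * (if ‖y - x‖ < R' then (1 : ℝ) else 0)
            * (if ‖x‖ < R + R' ∧ ¬ ‖x‖ < R then (1 : ℝ) else 0)
            * (if ‖y‖ < R + R' ∧ ¬ ‖y‖ < R then (1 : ℝ) else 0))) :
    ∃ p₁ ≥ (1 : ℝ), ∀ p ≥ p₁, ∀ x : EuclideanSpace ℝ (Fin d),
      ENNReal.ofReal (ψ p / 2) * Fp1 d α F 1 x ≤ Fp1 d α F p x := by
  obtain ⟨N, hN⟩ := (hψtop.eventually_ge_atTop 1).exists_forall_of_atTop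
  refine ⟨max p₀ N, hp₀.trans (le_max_left _ _), fun p hp x => ?_⟩
  have hpp₀ : p₀ ≤ p := (le_max_left _ _).trans hp
  have hp₁ : 1 ≤ p := hp₀.trans hpp₀
  have hψ₁ : 1 ≤ ψ p := hN p ((le_max_right _ _).trans hp)
  obtain rfl : F = fun x y => 1 / 2 * φ ‖x - y‖ * ballCutoff R R' x y :=
    funext fun x => funext fun y => hFdef x y
  rcases le_or_gt (R + R') ‖x‖ with hx | hx
  · simp [Fp1, ballCutoff_eq_zero_of_le_norm hR'.le hx]
  set S := Metric.ball x R' ∩ Metric.ball (0 : EuclideanSpace ℝ (Fin d)) (R + R')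
  have hS : StarConvex ℝ x S := ((convex_ball x R').inter (convex_ball 0 _)).starConvex
    ⟨Metric.mem_ball_self hR', mem_ball_zero_iff.2 hx⟩
  have hSm : MeasurableSet S := measurableSet_ball.inter measurableSet_ball
  have hf0 : ∀ y, 0 ≤ φ ‖x - y‖ := fun y => hφ0 _ (norm_nonneg _)
  rw [Fp1_eq_lintegral_withDensity, Fp1_eq_lintegral_withDensity, mul_left_comm]
  simp only [one_mul]
  gcongr
  refine mul_lintegral_one_sub_exp_neg_le_of_sandwich _ hSm hf0
    (hφC1.continuousOn.comp_continuous (by fun_prop) fun y => norm_nonneg _).measurable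
    (fun y hy => ?_) (fun y hy => by simp [ballCutoff_eq_zero_of_notMem hy])
    (zero_le_one.trans hp₁) fun t ht =>
      ofReal_mul_withDensity_superlevel_le hφC1.continuousOn hφmono hφzero hinv1 hα0 hψ₁
        hp₁ (hphiinv p hpp₀) hS hSm ht.le
  have hcut := ballCutoff_mem_Icc hx hy
  constructor <;> nlinarith [hf0 y, hcut.1, hcut.2]

/-- Example 2.3 of the paper: for the kernel `F` built from `φ(|x−y|)` and the balls
`B(0,R)`, `B(x,R')`, the non-local potentials satisfy `𝐅^{(p)}1 ≥ (ψ(p)/2)·𝐅1`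
for all large `p`. -/
theorem stmt4 (d : ℕ) (hd : 1 ≤ d) (α : ℝ) (hα0 : 0 < α) (hα2 : α < 2)
    (R R' : ℝ) (hR : 0 < R) (hR' : 0 < R')
    (φ : ℝ → ℝ)
    (hφ0 : ∀ r ∈ Set.Ici (0 : ℝ), 0 ≤ φ r)
    (hφC1 : ContDiffOn ℝ 1 φ (Set.Ici (0 : ℝ)))
    (hφmono : StrictMonoOn φ (Set.Ici (0 : ℝ)))
    (hφzero : φ 0 = 0)
    (hφlittleo : Filter.Tendsto (fun r => φ r / r ^ α) (nhdsWithin 0 (Set.Ioi 0)) (nhds 0))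
    (φinv : ℝ → ℝ)
    (hinv1 : ∀ t ∈ Set.Ici (0 : ℝ), φinv (φ t) = t)
    (hinv2 : ∀ s ∈ φ '' Set.Ici (0 : ℝ), φ (φinv s) = s)
    (ψ : ℝ → ℝ) (hψpos : ∀ p ≥ (1 : ℝ), 0 < ψ p) (hψle : ∀ p ≥ (1 : ℝ), ψ p ≤ p)
    (hψtop : Filter.Tendsto ψ Filter.atTop Filter.atTop)
    (p₀ : ℝ) (hp₀ : 1 ≤ p₀)
    (hphiinv : ∀ p ≥ p₀, ∀ t : ℝ, 0 ≤ t → (∃ r ≥ (0 : ℝ), t < φ r) →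
      (φinv (t / p)) ^ α ≤ (ψ p)⁻¹ * (φinv t) ^ α)
    (F : EuclideanSpace ℝ (Fin d) → EuclideanSpace ℝ (Fin d) → ℝ)
    (hFdef : ∀ x y, F x y = (1 / 2) * φ ‖x - y‖ *
      ((if ‖y - x‖ < R' then (1 : ℝ) else 0) * (if ‖x‖ < R then (1 : ℝ) else 0)
        + (if ‖x - y‖ < R' then (1 : ℝ) else 0) * (if ‖y‖ < R then (1 : ℝ) else 0)
        + (if ‖x - y‖ < R' then (1 : ℝ) else 0) * (if ‖y - x‖ < R' then (1 : ℝ) else 0)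
            * (if ‖x‖ < R + R' ∧ ¬ ‖x‖ < R then (1 : ℝ) else 0)
            * (if ‖y‖ < R + R' ∧ ¬ ‖y‖ < R then (1 : ℝ) else 0))) :
    ∃ p₁ ≥ (1 : ℝ), ∀ p ≥ p₁, ∀ x : EuclideanSpace ℝ (Fin d),
      ENNReal.ofReal (ψ p / 2) * Fp1 d α F 1 x ≤ Fp1 d α F p x :=
  stmt4_general d α hα0 R R' hR' φ hφ0 hφC1 hφmono hφzero φinv hinv1 ψ hψtop p₀ hp₀ hphiinv F hFdef
end
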